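/- arXiv:2511.22376 — 2 statements merged into one kernel-verified Lean document; each statement's English description precedes it below -/
import Mathlib

section
/- The complement of G⁺ (the set of arguments not attacked by the grounded extension) is itself a self-defending set; hence the largest self-defending extension is exactly the complement of G⁺. -/
/-
If `y` attacks an argument outside `G⁺` and every attacker of `y` lay in `G⁺`, then `G` would
defend `y`, so `y ∈ G` and its target would lie in `G⁺` after all; hence the complement of `G⁺`
defends itself. Conversely, for a self-defending `X` the arguments attacking nothing in `X` form a
prefixed point of the defense function, so they contain `G`: nothing in `G` attacks `X`.
-/

def defenseFn {A : Type*} (att : A → A → Prop) (S : Set A) : Set A :=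
  {x | ∀ y, att y x → ∃ z ∈ S, att z y}

/-- `Gr` is the grounded extension: the least fixed point of the defense function. -/
def IsGrounded {A : Type*} (att : A → A → Prop) (Gr : Set A) : Prop :=
  defenseFn att Gr = Gr ∧ ∀ S, defenseFn att S = S → Gr ⊆ S

/-- `X` is self-defending: every attacker of an element of `X` is attacked by an element of `X`. -/
def SelfDefending {A : Type*} (att : A → A → Prop) (X : Set A) : Prop :=
  ∀ y, (∃ x ∈ X, att y x) → ∃ x ∈ X, att x y

section

variable {A : Type*} (att : A → A → Prop)

lemma defenseFn_mono : Monotone (defenseFn att) := by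
  intro S T hST x hx y hy
  obtain ⟨z, hz, hzy⟩ := hx y hy
  exact ⟨z, hST hz, hzy⟩

lemma IsGrounded.subset_of_defenseFn_subset {Gr P : Set A} (hGr : IsGrounded att Gr)
    (hP : defenseFn att P ⊆ P) : Gr ⊆ P :=
  let F : Set A →o Set A := ⟨defenseFn att, defenseFn_mono att⟩
  (hGr.2 _ F.map_lfp).trans (F.lfp_le hP)

lemma selfDefending_compl_attackedBy_of_defenseFn_subset {S : Set A}
    (hS : defenseFn att S ⊆ S) : SelfDefending att {x | ∃ s ∈ S, att s x}ᶜ := by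
  rintro y ⟨x, hx, hyx⟩
  by_contra hundefended
  have hy : y ∈ defenseFn att S := fun w hwy =>
    by_contra fun hw => hundefended ⟨w, hw, hwy⟩
  exact hx ⟨y, hS hy, hyx⟩

lemma SelfDefending.defenseFn_nonattackers_subset {X : Set A} (hX : SelfDefending att X) :
    defenseFn att {g | ∀ x ∈ X, ¬ att g x} ⊆ {g | ∀ x ∈ X, ¬ att g x} := by
  intro g hg x hx hgx
  obtain ⟨x', hx', hx'g⟩ := hX g ⟨x, hx, hgx⟩
  obtain ⟨z, hz, hzx'⟩ := hg x' hx'g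
  exact hz x' hx' hzx'

end

/-- The complement of `G⁺` is self-defending, and it is the largest
self-defending set. -/
theorem compl_Gplus_largest_selfDefending {A : Type*} (att : A → A → Prop)
    (Gr : Set A) (hGr : IsGrounded att Gr) :
    SelfDefending att ({x | ∃ g ∈ Gr, att g x}ᶜ) ∧
      ∀ X : Set A, SelfDefending att X → X ⊆ {x | ∃ g ∈ Gr, att g x}ᶜ := by
  refine ⟨selfDefending_compl_attackedBy_of_defenseFn_subset att hGr.1.subset, ?_⟩
  rintro X hX x hx ⟨g, hg, hgx⟩
  have hGr_nonattacking : Gr ⊆ {g | ∀ x ∈ X, ¬ att g x} :=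
    hGr.subset_of_defenseFn_subset att hX.defenseFn_nonattackers_subset
  exact hGr_nonattacking hg x hx hgx
end

section
/- For any node ρ of the tree T_S, if ρ has rank at most α (in the well-founded part of T_S), then some element of G_{α+1} attacks some element of ran_S(ρ). -/
/-- `G` is the transfinite iteration of the defense function from `∅`. -/
def IsIter {A : Type*} (att : A → A → Prop) (G : Ordinal → Set A) : Prop :=
  G 0 = ∅ ∧ (∀ β : Ordinal, G (β + 1) = defenseFn att (G β)) ∧
    ∀ l : Ordinal, Order.IsSuccLimit l → G l = ⋃ β ∈ Set.Iio l, G β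

/-- `π` is an infinite path through the tree `T`. -/
def IsPath (T : Set (List ℕ)) (π : ℕ → ℕ) : Prop :=
  ∀ n : ℕ, (List.ofFn fun i : Fin n => π i) ∈ T

/-- `ran_S(σ) = S ∪ {a_{σ(k)-1} : σ(k) ≥ 1}`. -/
def ranS {A : Type} (a : ℕ → A) (S : Set A) (σ : List ℕ) : Set A :=
  S ∪ {x | ∃ k : Fin σ.length, 1 ≤ σ.get k ∧ x = a (σ.get k - 1)}

/-- The branching rule of the tree `T_S` at a node `ρ` (with `n` the first
component of the unpairing of `|ρ|`): if `a_n` attacks some element of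
`ran_S(ρ)`, the children are the `i+1` with `a_i` attacking `a_n`; otherwise
the unique child is `0`. -/
def stepOK {A : Type} (att : A → A → Prop) (a : ℕ → A) (S : Set A)
    (ρ : List ℕ) (i : ℕ) : Prop :=
  ((∃ x ∈ ranS a S ρ, att (a (Nat.unpair ρ.length).1) x) ∧
      1 ≤ i ∧ att (a (i - 1)) (a (Nat.unpair ρ.length).1)) ∨
  ((¬ ∃ x ∈ ranS a S ρ, att (a (Nat.unpair ρ.length).1) x) ∧ i = 0)

/-- The tree `T_S`: all finite sequences each of whose steps obeys `stepOK`. -/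
def TS {A : Type} (att : A → A → Prop) (a : ℕ → A) (S : Set A) : Set (List ℕ) :=
  {σ | ∀ (ρ : List ℕ) (i : ℕ), ρ ++ [i] <+: σ → stepOK att a S ρ i}

/-- `RankLE T σ β` : `σ` is ranked in `T` with rank at most `β`
(every child of `σ` in `T` has rank strictly less than `β`). -/
inductive RankLE (T : Set (List ℕ)) : List ℕ → Ordinal → Prop
  | intro (σ : List ℕ) (β : Ordinal) (g : ℕ → Ordinal)
      (hlt : ∀ n : ℕ, σ ++ [n] ∈ T → g n < β)
      (h : ∀ n : ℕ, σ ++ [n] ∈ T → RankLE T (σ ++ [n]) (g n)) : RankLE T σ β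

lemma defenseFn_mono_s18 {A : Type*} (att : A → A → Prop) {S T : Set A} (h : S ⊆ T) :
    defenseFn att S ⊆ defenseFn att T := fun _ hx y hy =>
  let ⟨z, hz, hzy⟩ := hx y hy
  ⟨z, h hz, hzy⟩

namespace IsIter

variable {A : Type*} {att : A → A → Prop} {G : Ordinal → Set A}

lemma subset_of_lt_of_isSuccLimit (hG : IsIter att G) {β l : Ordinal}
    (hl : Order.IsSuccLimit l) (hβ : β < l) : G β ⊆ G l := by
  rw [hG.2.2 l hl]
  exact Set.subset_biUnion_of_mem (u := G) hβ

lemma subset_defenseFn (hG : IsIter att G) (β : Ordinal) : G β ⊆ defenseFn att (G β) := by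
  induction β using Ordinal.limitRecOn with
  | zero => simp [hG.1]
  | add_one β ih =>
    rw [hG.2.1]
    exact defenseFn_mono_s18 att ih
  | limit l hl ih =>
    intro x hx
    rw [hG.2.2 l hl] at hx
    obtain ⟨β, hβ, hxβ⟩ := Set.mem_iUnion₂.mp hx
    exact defenseFn_mono_s18 att (hG.subset_of_lt_of_isSuccLimit hl hβ) (ih β hβ hxβ)

lemma subset_succ (hG : IsIter att G) (β : Ordinal) : G β ⊆ G (β + 1) :=
  hG.2.1 β ▸ hG.subset_defenseFn β

lemma monotone (hG : IsIter att G) : Monotone G := by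
  intro β γ hβγ
  induction γ using Ordinal.limitRecOn with
  | zero => rw [nonpos_iff_eq_zero.mp hβγ]
  | add_one γ ih =>
    rcases hβγ.lt_or_eq with hlt | rfl
    · exact (ih (Order.lt_add_one_iff.mp hlt)).trans (hG.subset_succ γ)
    · rfl
  | limit l hl _ =>
    rcases hβγ.lt_or_eq with hlt | rfl
    · exact hG.subset_of_lt_of_isSuccLimit hl hlt
    · rfl

end IsIter

section TS

variable {A : Type} {att : A → A → Prop} {a : ℕ → A} {S : Set A}

lemma mem_ranS_iff {σ : List ℕ} {x : A} :
    x ∈ ranS a S σ ↔ x ∈ S ∨ ∃ k ∈ σ, 1 ≤ k ∧ x = a (k - 1) := by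
  simp only [ranS, Set.mem_union, Set.mem_ofPred_eq, List.mem_iff_get]
  constructor
  · rintro (hx | ⟨k, hk, rfl⟩)
    exacts [Or.inl hx, Or.inr ⟨_, ⟨k, rfl⟩, hk, rfl⟩]
  · rintro (hx | ⟨_, ⟨k, rfl⟩, hk, rfl⟩)
    exacts [Or.inl hx, Or.inr ⟨k, hk, rfl⟩]

lemma ranS_append_singleton (σ : List ℕ) (i : ℕ) :
    ranS a S (σ ++ [i]) = ranS a S σ ∪ {x | 1 ≤ i ∧ x = a (i - 1)} := by
  ext x
  simp only [mem_ranS_iff, List.mem_append, List.mem_singleton, Set.mem_union,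
    Set.mem_ofPred_eq]
  grind

lemma append_singleton_mem_TS {ρ : List ℕ} {i : ℕ} (hρ : ρ ∈ TS att a S)
    (h : stepOK att a S ρ i) : ρ ++ [i] ∈ TS att a S := by
  intro ρ' j hpre
  rcases List.prefix_concat_iff.mp hpre with heq | hpre'
  · obtain ⟨rfl, hji⟩ := List.append_inj heq (by simpa using congrArg List.length heq)
    simp only [List.cons.injEq, and_true] at hji
    exact hji ▸ h
  · exact hρ ρ' j hpre'

variable {G : Ordinal → Set A} {σ : List ℕ} {β : Ordinal}

lemma mem_iter_succ_of_children (hG : IsIter att G) (ha : Function.Surjective a)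
    (hσ : σ ∈ TS att a S) (hatt : ∃ x ∈ ranS a S σ, att (a (Nat.unpair σ.length).1) x)
    (hnone : ¬ ∃ g ∈ G β, ∃ x ∈ ranS a S σ, att g x)
    (hchildren : ∀ i, σ ++ [i] ∈ TS att a S → ∃ g ∈ G β, ∃ x ∈ ranS a S (σ ++ [i]), att g x) :
    a (Nat.unpair σ.length).1 ∈ G (β + 1) := by
  rw [hG.2.1]
  intro y hy
  obtain ⟨i, rfl⟩ := ha y
  have hchild : σ ++ [i + 1] ∈ TS att a S :=
    append_singleton_mem_TS hσ (Or.inl ⟨hatt, by omega, hy⟩)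
  obtain ⟨g, hg, x, hx, hgx⟩ := hchildren (i + 1) hchild
  rw [ranS_append_singleton] at hx
  rcases hx with hx | ⟨-, rfl⟩
  · exact absurd ⟨g, hg, x, hx, hgx⟩ hnone
  · exact ⟨g, hg, hgx⟩

lemma exists_attack_of_children (hG : IsIter att G) (ha : Function.Surjective a)
    (hσ : σ ∈ TS att a S)
    (hchildren : ∀ i, σ ++ [i] ∈ TS att a S → ∃ g ∈ G β, ∃ x ∈ ranS a S (σ ++ [i]), att g x) :
    ∃ g ∈ G (β + 1), ∃ x ∈ ranS a S σ, att g x := by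
  by_cases hatt : ∃ x ∈ ranS a S σ, att (a (Nat.unpair σ.length).1) x
  · by_cases hsome : ∃ g ∈ G β, ∃ x ∈ ranS a S σ, att g x
    · obtain ⟨g, hg, hx⟩ := hsome
      exact ⟨g, hG.subset_succ β hg, hx⟩
    · obtain ⟨x, hx, hax⟩ := hatt
      exact ⟨_, mem_iter_succ_of_children hG ha hσ ⟨x, hx, hax⟩ hsome hchildren, x, hx, hax⟩
  · obtain ⟨g, hg, x, hx, hgx⟩ := hchildren 0 (append_singleton_mem_TS hσ (Or.inr ⟨hatt, rfl⟩))
    rw [ranS_append_singleton] at hx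
    rcases hx with hx | ⟨h, -⟩
    · exact ⟨g, hG.subset_succ β hg, x, hx, hgx⟩
    · omega

end TS

theorem rank_attack_general {A : Type} (att : A → A → Prop)
    (a : ℕ → A) (ha : Function.Surjective a) (S : Set A)
    (G : Ordinal → Set A) (hG : IsIter att G)
    (ρ : List ℕ) (hρ : ρ ∈ TS att a S) (α : Ordinal)
    (hrank : RankLE (TS att a S) ρ α) :
    ∃ g ∈ G (α + 1), ∃ x ∈ ranS a S ρ, att g x := by
  induction hrank with
  | intro σ β r hlt _ ih =>
    refine exists_attack_of_children hG ha hρ fun i hi => ?_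
    obtain ⟨g, hg, hx⟩ := ih i hi hi
    exact ⟨g, hG.monotone (Order.add_one_le_of_lt (hlt i hi)) hg, hx⟩

/-- If a node `ρ` of `T_S` has rank at most `α`, then some element of
`G_{α+1}` attacks some element of `ran_S(ρ)`. -/
theorem rank_attack {A : Type} (att : A → A → Prop)
    (a : ℕ → A) (ha : Function.Surjective a) (S : Set A) (hS : S.Finite)
    (G : Ordinal → Set A) (hG : IsIter att G)
    (ρ : List ℕ) (hρ : ρ ∈ TS att a S) (α : Ordinal)
    (hrank : RankLE (TS att a S) ρ α) :
    ∃ g ∈ G (α + 1), ∃ x ∈ ranS a S ρ, att g x :=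
  rank_attack_general att a ha S G hG ρ hρ α hrank
end
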